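/- (Zhang et al. criterion, θ = π case) For every separable state ρ on H = H_A ⊗ H_B with marginals ρ_A = tr_B(ρ) and ρ_B = tr_A(ρ): ‖ρ + ρ_A ⊗ ρ_B‖_CCN ≤ √[ (1 + tr(ρ_A²)) (1 + tr(ρ_B²)) ]. -/

import Mathlib

open scoped Kronecker ComplexOrder
open Matrix Finset

/-!
Write ρ = ∑ pᵢ ρᵢᴬ ⊗ ρᵢᴮ. Appending the single product ρ_A ⊗ ρ_B to this decomposition gives
‖ρ + ρ_A ⊗ ρ_B‖_CCN ≤ ∑ pᵢ ‖ρᵢᴬ‖ ‖ρᵢᴮ‖ + ‖ρ_A‖ ‖ρ_B‖ ≤ 1 + ‖ρ_A‖ ‖ρ_B‖, because a density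
operator has purity tr ρ² ≤ (tr ρ)² = 1, i.e. Hilbert–Schmidt norm at most one. The marginals
are Hermitian, so ‖ρ_A‖² = tr ρ_A², and Cauchy–Schwarz in ℝ² gives
1 + xy ≤ √((1 + x²)(1 + y²)).
-/

/-- Hilbert-Schmidt inner product on matrices. -/
noncomputable def hsInner {n : Type*} [Fintype n] (A B : Matrix n n ℂ) : ℂ :=
  (Aᴴ * B).trace

/-- Hilbert-Schmidt norm. -/
noncomputable def hsNorm {n : Type*} [Fintype n] (A : Matrix n n ℂ) : ℝ :=
  Real.sqrt (hsInner A A).re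

/-- A density operator: positive semidefinite with unit trace. -/
def IsDensity {n : Type*} [Fintype n] (ρ : Matrix n n ℂ) : Prop :=
  ρ.PosSemidef ∧ ρ.trace = 1

/-- A separable bipartite state: a convex combination of product density operators. -/
def IsSeparableState {NA NB : ℕ} (ρ : Matrix (Fin NA × Fin NB) (Fin NA × Fin NB) ℂ) : Prop :=
  ∃ (m : ℕ) (p : Fin m → ℝ)
    (ρA : Fin m → Matrix (Fin NA) (Fin NA) ℂ) (ρB : Fin m → Matrix (Fin NB) (Fin NB) ℂ),
    (∀ i, 0 < p i) ∧ (∑ i, p i = 1) ∧ (∀ i, IsDensity (ρA i)) ∧ (∀ i, IsDensity (ρB i)) ∧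
    ρ = ∑ i, (p i : ℂ) • (ρA i ⊗ₖ ρB i)

/-- The computable cross norm (CCN) on bipartite operators. -/
noncomputable def ccn {NA NB : ℕ} (C : Matrix (Fin NA × Fin NB) (Fin NA × Fin NB) ℂ) : ℝ :=
  sInf { r : ℝ | ∃ (n : ℕ) (A : Fin n → Matrix (Fin NA) (Fin NA) ℂ)
    (B : Fin n → Matrix (Fin NB) (Fin NB) ℂ),
    C = ∑ k, A k ⊗ₖ B k ∧ r = ∑ k, hsNorm (A k) * hsNorm (B k) }

/-- The marginal (reduced density operator) of a bipartite operator on the A-side. -/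
noncomputable def margA {NA NB : ℕ} (ρ : Matrix (Fin NA × Fin NB) (Fin NA × Fin NB) ℂ) :
    Matrix (Fin NA) (Fin NA) ℂ :=
  Matrix.of fun i i' => ∑ b : Fin NB, ρ (i, b) (i', b)

/-- The marginal (reduced density operator) of a bipartite operator on the B-side. -/
noncomputable def margB {NA NB : ℕ} (ρ : Matrix (Fin NA × Fin NB) (Fin NA × Fin NB) ℂ) :
    Matrix (Fin NB) (Fin NB) ℂ :=
  Matrix.of fun b b' => ∑ i : Fin NA, ρ (i, b) (i, b')

section HilbertSchmidt

variable {n : Type*} [Fintype n]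

lemma hsNorm_nonneg (A : Matrix n n ℂ) : 0 ≤ hsNorm A :=
  Real.sqrt_nonneg _

lemma re_hsInner_self_nonneg (A : Matrix n n ℂ) : 0 ≤ (hsInner A A).re :=
  (Complex.nonneg_iff.mp (posSemidef_conjTranspose_mul_self A).trace_nonneg).1

lemma sq_hsNorm (A : Matrix n n ℂ) : hsNorm A ^ 2 = (hsInner A A).re :=
  Real.sq_sqrt (re_hsInner_self_nonneg A)

lemma Matrix.IsHermitian.sq_hsNorm {A : Matrix n n ℂ} (hA : A.IsHermitian) :
    hsNorm A ^ 2 = (A * A).trace.re := by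
  rw [_root_.sq_hsNorm, hsInner, hA.eq]

lemma hsNorm_smul (c : ℂ) (A : Matrix n n ℂ) : hsNorm (c • A) = ‖c‖ * hsNorm A := by
  have h : hsInner (c • A) (c • A) = ((‖c‖ ^ 2 : ℝ) : ℂ) * hsInner A A := by
    simp only [hsInner, conjTranspose_smul, Matrix.smul_mul, Matrix.mul_smul, trace_smul,
      smul_smul, smul_eq_mul, RCLike.star_def]
    rw [mul_comm c, Complex.conj_mul']
    push_cast
    ring
  rw [hsNorm, h, Complex.re_ofReal_mul, Real.sqrt_mul (by positivity),
    Real.sqrt_sq (norm_nonneg c), hsNorm]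

lemma Matrix.IsHermitian.re_trace_mul_self [DecidableEq n] {A : Matrix n n ℂ}
    (hA : A.IsHermitian) : (A * A).trace.re = ∑ i, hA.eigenvalues i ^ 2 := by
  conv_lhs => rw [hA.spectral_theorem, ← map_mul, Unitary.conjStarAlgAut_apply, trace_mul_cycle,
    Unitary.coe_star_mul_self, one_mul, diagonal_mul_diagonal, trace_diagonal]
  simp [Complex.re_sum, sq]

lemma Matrix.PosSemidef.re_trace_mul_self_le {A : Matrix n n ℂ} (hA : A.PosSemidef) :
    (A * A).trace.re ≤ A.trace.re ^ 2 := by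
  classical
  rw [hA.isHermitian.re_trace_mul_self, hA.isHermitian.trace_eq_sum_eigenvalues]
  simpa [Complex.re_sum] using
    Finset.sum_sq_le_sq_sum_of_nonneg fun i _ => hA.eigenvalues_nonneg i

lemma IsDensity.hsNorm_le_one {ρ : Matrix n n ℂ} (h : IsDensity ρ) : hsNorm ρ ≤ 1 := by
  have hsq := h.1.re_trace_mul_self_le
  rw [← h.1.isHermitian.sq_hsNorm, h.2, Complex.one_re, one_pow] at hsq
  exact pow_le_one_iff_of_nonneg (hsNorm_nonneg ρ) two_ne_zero |>.mp hsq

end HilbertSchmidt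

section Marginals

variable {NA NB : ℕ}

lemma Matrix.IsHermitian.margA {C : Matrix (Fin NA × Fin NB) (Fin NA × Fin NB) ℂ}
    (hC : C.IsHermitian) : (margA C).IsHermitian := by
  ext
  simp only [conjTranspose_apply, _root_.margA, of_apply, star_sum, hC.apply]

lemma Matrix.IsHermitian.margB {C : Matrix (Fin NA × Fin NB) (Fin NA × Fin NB) ℂ}
    (hC : C.IsHermitian) : (margB C).IsHermitian := by
  ext
  simp only [conjTranspose_apply, _root_.margB, of_apply, star_sum, hC.apply]

end Marginals

lemma ccn_le_of_eq_sum {NA NB n : ℕ} {C : Matrix (Fin NA × Fin NB) (Fin NA × Fin NB) ℂ}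
    (A : Fin n → Matrix (Fin NA) (Fin NA) ℂ) (B : Fin n → Matrix (Fin NB) (Fin NB) ℂ)
    (hC : C = ∑ k, A k ⊗ₖ B k) : ccn C ≤ ∑ k, hsNorm (A k) * hsNorm (B k) := by
  refine csInf_le ⟨0, ?_⟩ ⟨n, A, B, hC, rfl⟩
  rintro r ⟨_, A', B', -, rfl⟩
  exact Finset.sum_nonneg fun k _ => mul_nonneg (hsNorm_nonneg _) (hsNorm_nonneg _)

lemma ccn_sum_add_kronecker_le {NA NB m : ℕ}
    (A : Fin m → Matrix (Fin NA) (Fin NA) ℂ) (B : Fin m → Matrix (Fin NB) (Fin NB) ℂ)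
    (A' : Matrix (Fin NA) (Fin NA) ℂ) (B' : Matrix (Fin NB) (Fin NB) ℂ) :
    ccn (∑ k, A k ⊗ₖ B k + A' ⊗ₖ B') ≤
      ∑ k, hsNorm (A k) * hsNorm (B k) + hsNorm A' * hsNorm B' := by
  simpa [Fin.sum_univ_castSucc] using
    ccn_le_of_eq_sum (Fin.snoc A A') (Fin.snoc B B') (by simp [Fin.sum_univ_castSucc])

namespace IsSeparableState

variable {NA NB : ℕ} {ρ : Matrix (Fin NA × Fin NB) (Fin NA × Fin NB) ℂ}

lemma posSemidef (hρ : IsSeparableState ρ) : ρ.PosSemidef := by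
  obtain ⟨m, p, ρA, ρB, hp, -, hA, hB, rfl⟩ := hρ
  exact posSemidef_sum _ fun k _ =>
    ((hA k).1.kronecker (hB k).1).smul (Complex.zero_le_real.mpr (hp k).le)

lemma ccn_add_kronecker_le (hρ : IsSeparableState ρ) (A : Matrix (Fin NA) (Fin NA) ℂ)
    (B : Matrix (Fin NB) (Fin NB) ℂ) : ccn (ρ + A ⊗ₖ B) ≤ 1 + hsNorm A * hsNorm B := by
  obtain ⟨m, p, ρA, ρB, hp, hp1, hA, hB, rfl⟩ := hρ
  simp_rw [← smul_kronecker]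
  refine (ccn_sum_add_kronecker_le _ _ _ _).trans (add_le_add_left ?_ _)
  calc ∑ k, hsNorm ((p k : ℂ) • ρA k) * hsNorm (ρB k) ≤ ∑ k, p k := by
        refine Finset.sum_le_sum fun k _ => ?_
        rw [hsNorm_smul, Complex.norm_real, Real.norm_of_nonneg (hp k).le, mul_assoc]
        exact mul_le_of_le_one_right (hp k).le <|
          mul_le_one₀ (hA k).hsNorm_le_one (hsNorm_nonneg _) (hB k).hsNorm_le_one
    _ = 1 := hp1

end IsSeparableState

lemma one_add_mul_le_sqrt_mul (x y : ℝ) : 1 + x * y ≤ √((1 + x ^ 2) * (1 + y ^ 2)) :=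
  Real.le_sqrt_of_sq_le (by nlinarith [sq_nonneg (x - y)])

theorem stmt17_zhang_criterion_general {NA NB : ℕ}
    (ρ : Matrix (Fin NA × Fin NB) (Fin NA × Fin NB) ℂ)
    (hsep : IsSeparableState ρ) :
    ccn (ρ + margA ρ ⊗ₖ margB ρ)
      ≤ Real.sqrt ((1 + (margA ρ * margA ρ).trace.re)
          * (1 + (margB ρ * margB ρ).trace.re)) := by
  have hρ := hsep.posSemidef.isHermitian
  rw [← hρ.margA.sq_hsNorm, ← hρ.margB.sq_hsNorm]
  exact (hsep.ccn_add_kronecker_le _ _).trans (one_add_mul_le_sqrt_mul _ _)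

/-- The Zhang et al. separability criterion (the θ = π case): for every separable state ρ,
‖ρ + ρ_A ⊗ ρ_B‖_CCN ≤ √((1 + tr ρ_A²)(1 + tr ρ_B²)). -/
theorem stmt17_zhang_criterion {NA NB : ℕ} (hA : 2 ≤ NA) (hB : 2 ≤ NB)
    (ρ : Matrix (Fin NA × Fin NB) (Fin NA × Fin NB) ℂ)
    (hsep : IsSeparableState ρ) :
    ccn (ρ + margA ρ ⊗ₖ margB ρ)
      ≤ Real.sqrt ((1 + (margA ρ * margA ρ).trace.re)
          * (1 + (margB ρ * margB ρ).trace.re)) :=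
  stmt17_zhang_criterion_general ρ hsep
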